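/- arXiv:1907.05629 — 2 statements merged into one kernel-verified Lean document; each statement's English description precedes it below -/
import Mathlib

section
/- Let θ be an inner function with θ̂(0) = ⟨θ, 𝟙⟩ = 0 (equivalently 𝟙 ∈ K_θ), and let p be an isometric multiplier on K_θ; note p = p·𝟙 ∈ H², and set p(0) = ⟨p, 𝟙⟩. Then for every h ∈ K_θ one has ⟨p·h, conj(p(0))·p⟩ = ⟨p·h, 𝟙⟩; that is, conj(p(0))·p is the orthogonal projection of 𝟙 onto the closed subspace pK_θ. -/
open MeasureTheory Complex Filter

noncomputable section

namespace HankelSchmidt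

instance fact_two_pi_pos : Fact (0 < 2 * Real.pi) := ⟨Real.two_pi_pos⟩

/-- The circle `𝕋`, realized as `ℝ / 2πℤ`. -/
abbrev Tc : Type := AddCircle (2 * Real.pi)

/-- Normalized arc-length (Haar) measure on the circle. -/
abbrev muc : Measure Tc := AddCircle.haarAddCircle

/-- The space `L²(𝕋)`. -/
abbrev Ltwo := Lp ℂ 2 muc

/-- The Hardy space `H²`: the subspace of `L²(𝕋)` of functions whose Fourier coefficients
of negative index vanish. -/
def Hardy : Submodule ℂ Ltwo where
  carrier := {f | ∀ n : ℤ, n < 0 → fourierBasis.repr f n = 0}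
  add_mem' := by
    intro a b ha hb n hn
    simp [map_add, lp.coeFn_add, ha n hn, hb n hn]
  zero_mem' := by
    intro n hn
    simp
  smul_mem' := by
    intro c a ha n hn
    simp [_root_.map_smul, lp.coeFn_smul, ha n hn]

theorem hardy_isClosed : IsClosed (Hardy : Set Ltwo) := by
  have hset : (Hardy : Set Ltwo) =
      ⋂ (n : ℤ) (_ : n < 0), {f : Ltwo | fourierBasis.repr f n = 0} := by
    ext f
    simp only [Set.mem_iInter, Set.mem_setOf_eq]
    rfl
  rw [hset]
  refine isClosed_iInter fun n => isClosed_iInter fun hn => ?_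
  have hcont : Continuous fun f : Ltwo => fourierBasis.repr f n := by
    have h1 : Continuous fun g : lp (fun _ : ℤ => ℂ) 2 => g n :=
      (continuous_apply n).comp lp.uniformContinuous_coe.continuous
    exact h1.comp fourierBasis.repr.continuous
  exact isClosed_eq hcont continuous_const

instance : CompleteSpace (Hardy : Submodule ℂ Ltwo) := hardy_isClosed.completeSpace_coe

/-- The Hardy space as a type. -/
abbrev Hd := (Hardy : Submodule ℂ Ltwo)

/-- The orthogonal projection `P : L²(𝕋) → H²`. -/
def P2 : Ltwo → Hd := fun f => Hardy.orthogonalProjectionOnto f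

/-- The orthogonal projection `P`, viewed as a map `L²(𝕋) → L²(𝕋)` with range `H²`. -/
def PL : Ltwo → Ltwo := fun f => ((P2 f : Hd) : Ltwo)

theorem fourierCoeff_congr_ae {f g : Tc → ℂ} (h : f =ᵐ[muc] g) (n : ℤ) :
    fourierCoeff f n = fourierCoeff g n :=
  integral_congr_ae (h.mono fun x hx => by dsimp only; rw [hx])

theorem mem_Hardy_iff {f : Ltwo} :
    f ∈ Hardy ↔ ∀ n : ℤ, n < 0 → fourierCoeff (f : Tc → ℂ) n = 0 := by
  constructor
  · intro hf n hn; rw [← fourierBasis_repr]; exact hf n hn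
  · intro hf n hn; rw [fourierBasis_repr]; exact hf n hn

/-- Pointwise multiplication by a bounded measurable function preserves `L²`. -/
theorem memLp_mul_of_bounded {g : Tc → ℂ} (hg : AEStronglyMeasurable g muc) {C : ℝ}
    (hb : ∀ᵐ x ∂muc, ‖g x‖ ≤ C) (f : Ltwo) :
    MemLp (fun x => g x * (f : Tc → ℂ) x) 2 muc := by
  refine MemLp.of_le_mul (c := C) (Lp.memLp f) (hg.mul (Lp.aestronglyMeasurable f)) ?_
  filter_upwards [hb] with x hx
  rw [norm_mul]
  exact mul_le_mul_of_nonneg_right hx (norm_nonneg _)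

theorem fourier_abs (n : ℤ) (x : Tc) : ‖fourier n x‖ = 1 := by
  rw [fourier_apply]; exact Circle.norm_coe _

theorem fourier_norm_one (n : ℤ) (x : Tc) : ‖fourier n x‖ ≤ 1 :=
  le_of_eq (fourier_abs n x)

/-- Multiplication of an `L²` function by the monomial `z^n`. -/
def mulF (n : ℤ) (f : Ltwo) : Ltwo :=
  (memLp_mul_of_bounded ((map_continuous (fourier n)).aestronglyMeasurable)
    (Eventually.of_forall (fourier_norm_one n)) f).toLp _

theorem mulF_coe (n : ℤ) (f : Ltwo) :
    (mulF n f : Tc → ℂ) =ᵐ[muc] fun x => fourier n x * (f : Tc → ℂ) x :=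
  MemLp.coeFn_toLp _

theorem fourierCoeff_fourier_mul (f : Tc → ℂ) (m n : ℤ) :
    fourierCoeff (fun x => fourier m x * f x) n = fourierCoeff f (n - m) := by
  unfold fourierCoeff
  refine integral_congr_ae (Eventually.of_forall fun x => ?_)
  have h : @fourier (2 * Real.pi) (-(n - m)) x = fourier (-n) x * fourier m x := by
    rw [show -(n - m) = -n + m by ring, fourier_add]
  simp only [smul_eq_mul, h]
  ring

/-- The shift operator `S : H² → H²`, `(Sf)(z) = z·f(z)`. -/
def Sop (f : Hd) : Hd :=
  ⟨mulF 1 (f : Ltwo), by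
    rw [mem_Hardy_iff]
    intro n hn
    rw [fourierCoeff_congr_ae (mulF_coe 1 (f : Ltwo)) n, fourierCoeff_fourier_mul]
    exact (mem_Hardy_iff.mp f.2) (n - 1) (by omega)⟩

/-- The adjoint shift `S* : H² → H²`, `S*f = P(z̄·f)`. -/
def SstarOp (f : Hd) : Hd := P2 (mulF (-1) (f : Ltwo))

/-- The constant function `𝟙 ∈ H²`. -/
def oneH : Hd :=
  ⟨fourierLp 2 0, by
    rw [mem_Hardy_iff]
    intro n hn
    rw [← fourierBasis_repr]
    have h1 : (fourierLp (T := 2 * Real.pi) 2 0) = fourierBasis 0 := by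
      rw [coe_fourierBasis]
    rw [h1, HilbertBasis.repr_self, lp.single_apply]
    simp [Pi.single_apply, show n ≠ 0 by omega]⟩

/-- The inner product on `H²`, linear in the FIRST argument (the paper's convention
`⟨f, g⟩ = ∫ f ḡ`). -/
def ipH (f g : Hd) : ℂ := @inner ℂ Ltwo _ (g : Ltwo) (f : Ltwo)

/-- The inner product on `L²(𝕋)`, linear in the FIRST argument. -/
def ipL (f g : Ltwo) : ℂ := @inner ℂ Ltwo _ g f

/-- `θ ∈ H²` is an inner function if `|θ(z)| = 1` a.e. on `𝕋`. -/
def IsInnerFn (θ : Hd) : Prop := ∀ᵐ x ∂muc, ‖((θ : Ltwo) : Tc → ℂ) x‖ = 1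

/-- The set `θ·H² ⊆ L²(𝕋)` of pointwise a.e. products `θ·f`, `f ∈ H²`. -/
def thetaHardy (θ : Hd) : Set Ltwo :=
  {g : Ltwo | ∃ f : Hd, (g : Tc → ℂ) =ᵐ[muc]
    fun x => ((θ : Ltwo) : Tc → ℂ) x * ((f : Ltwo) : Tc → ℂ) x}

/-- The model space `K_θ = H² ∩ (θH²)^⊥`, as a subset of `L²(𝕋)`. -/
def KspaceL (θ : Hd) : Set Ltwo :=
  {h : Ltwo | h ∈ Hardy ∧ ∀ g ∈ thetaHardy θ, ipL h g = 0}

/-- The model space `K_θ`, as a subset of `H²`. -/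
def Kspace (θ : Hd) : Set Hd := {h : Hd | (h : Ltwo) ∈ KspaceL θ}

/-- `p` is an isometric multiplier on `K_θ`: `p` is measurable and, for every `h ∈ K_θ`,
the pointwise product `p·h` lies in `H²` and has the same norm as `h`. -/
def IsIsomMult (p : Tc → ℂ) (θ : Hd) : Prop :=
  Measurable p ∧ ∀ h ∈ Kspace θ, ∃ g : Hd,
    ((g : Ltwo) : Tc → ℂ) =ᵐ[muc] (fun x => p x * ((h : Ltwo) : Tc → ℂ) x) ∧
    ‖(g : Ltwo)‖ = ‖(h : Ltwo)‖

/-- The subspace `p·K_θ = {p·h : h ∈ K_θ}` of `H²`. -/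
def wModel (p : Tc → ℂ) (θ : Hd) : Set Hd :=
  {g : Hd | ∃ h ∈ Kspace θ, ((g : Ltwo) : Tc → ℂ) =ᵐ[muc]
    fun x => p x * ((h : Ltwo) : Tc → ℂ) x}

/-- A bounded Hankel operator on `H²`: a continuous antilinear map `H : H² → H²`
satisfying `S*H = HS`. -/
def IsHankelOp (H : Hd →L⋆[ℂ] Hd) : Prop := ∀ f : Hd, SstarOp (H f) = H (Sop f)

/-- A bounded measurable symbol on the circle (an `L^∞` function). -/
def IsBddFn (u : Tc → ℂ) : Prop := Measurable u ∧ ∃ C : ℝ, ∀ᵐ x ∂muc, ‖u x‖ ≤ C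

theorem memLp_mul_conj {u : Tc → ℂ} (hu : IsBddFn u) (f : Ltwo) :
    MemLp (fun x => u x * (starRingEnd ℂ) ((f : Tc → ℂ) x)) 2 muc := by
  obtain ⟨hmeas, C, hC⟩ := hu
  refine MemLp.of_le_mul (c := C) (Lp.memLp f)
    (hmeas.aestronglyMeasurable.mul
      (continuous_star.comp_aestronglyMeasurable (Lp.aestronglyMeasurable f))) ?_
  filter_upwards [hC] with x hx
  rw [norm_mul, RCLike.norm_conj]
  exact mul_le_mul_of_nonneg_right hx (norm_nonneg _)

/-- The Hankel operator with symbol `u`: `H_u f = P(u·f̄)`, defined on all of `L²(𝕋)`. -/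
def hankelL (u : Tc → ℂ) (hu : IsBddFn u) : Ltwo → Ltwo :=
  fun f => PL ((memLp_mul_conj hu f).toLp _)

/-- The Möbius transformation `μ(z) = (α − z)/(1 − ᾱz)` of the unit disk. -/
def mobius (α z : ℂ) : ℂ := (α - z) / (1 - (starRingEnd ℂ) α * z)

/-- The point `e^{ix} ∈ ℂ` corresponding to `x ∈ 𝕋`. -/
def circlePt (x : Tc) : ℂ := fourier 1 x

/-- The Möbius transformation `μ` viewed as a self-map of `𝕋`. -/
def mobiusT (α : ℂ) (x : Tc) : Tc := ((Complex.arg (mobius α (circlePt x)) : ℝ) : Tc)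

/-- The weight `√(1 − |α|²)/(1 − ᾱz)` in the definition of `U_μ`. -/
def umuWeight (α : ℂ) (x : Tc) : ℂ :=
  (Real.sqrt (1 - ‖α‖ ^ 2) : ℂ) / (1 - (starRingEnd ℂ) α * circlePt x)

/-- `U` is the operator `U_μ`: `(U_μ f)(z) = (√(1 − |α|²)/(1 − ᾱz))·f(μ(z))` a.e. -/
def IsUmu (α : ℂ) (U : Ltwo → Ltwo) : Prop :=
  ∀ f : Ltwo, ((U f : Ltwo) : Tc → ℂ) =ᵐ[muc]
    fun x => umuWeight α x * (f : Tc → ℂ) (mobiusT α x)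

/-! The hypothesis `θ̂(0) = 0` says that `𝟙 ⊥ θH²`, i.e. `𝟙 ∈ K_θ`. Multiplication by `p` preserves
norms on the subspace `K_θ`, so by polarization it preserves inner products there; in particular
`⟨p·h, p⟩ = ⟨p·h, p·𝟙⟩ = ⟨h, 𝟙⟩ = ĥ(0)`. Since the zeroth Fourier coefficient is multiplicative on
`H²`, `⟨p·h, 𝟙⟩ = p(0)·ĥ(0)` as well. -/

open ComplexConjugate

theorem inner_eq_inner_of_norm_add_smul_eq {𝕜 E F : Type*} [RCLike 𝕜]
    [NormedAddCommGroup E] [InnerProductSpace 𝕜 E] [NormedAddCommGroup F] [InnerProductSpace 𝕜 F]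
    {x₁ x₂ : E} {y₁ y₂ : F} (h : ∀ c : 𝕜, ‖x₁ + c • x₂‖ = ‖y₁ + c • y₂‖) :
    inner 𝕜 x₁ x₂ = inner 𝕜 y₁ y₂ := by
  have h_sub (c : 𝕜) : ‖x₁ - c • x₂‖ = ‖y₁ - c • y₂‖ := by
    simpa only [sub_eq_add_neg, ← neg_smul] using h (-c)
  have h_one := h 1
  have h_sub_one := h_sub 1
  simp only [one_smul] at h_one h_sub_one
  rw [inner_eq_sum_norm_sq_div_four, inner_eq_sum_norm_sq_div_four, h_one, h_sub_one, h_sub, h]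

section FourierCoeff

variable {T : ℝ} [Fact (0 < T)]

theorem fourierCoeff_conj (f : AddCircle T → ℂ) (n : ℤ) :
    fourierCoeff (fun x => conj (f x)) n = conj (fourierCoeff f (-n)) := by
  simp only [fourierCoeff, ← integral_conj, smul_eq_mul, map_mul, neg_neg, fourier_neg]

theorem inner_fourierBasis (f : Lp ℂ 2 (@AddCircle.haarAddCircle T _)) (n : ℤ) :
    inner ℂ (fourierBasis n) f = fourierCoeff f n := by
  rw [← fourierBasis.repr_apply_apply, fourierBasis_repr]

theorem inner_star_fourierBasis (f : Lp ℂ 2 (@AddCircle.haarAddCircle T _)) (n : ℤ) :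
    inner ℂ (star f) (fourierBasis n) = fourierCoeff f (-n) := by
  have h_star : fourierCoeff ⇑(star f) n = fourierCoeff (fun x => conj (f x)) n :=
    integral_congr_ae ((Lp.coeFn_star f).mono fun x hx => by simp [hx])
  rw [← inner_conj_symm, inner_fourierBasis, h_star, fourierCoeff_conj, conj_conj]

theorem fourierCoeff_mul_zero {f g : Lp ℂ 2 (@AddCircle.haarAddCircle T _)}
    (hf : ∀ n : ℤ, n < 0 → fourierCoeff f n = 0) (hg : ∀ n : ℤ, n < 0 → fourierCoeff g n = 0) :
    fourierCoeff (fun x => f x * g x) 0 = fourierCoeff f 0 * fourierCoeff g 0 := by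
  have h_inner : fourierCoeff (fun x => f x * g x) 0 = inner ℂ (star f) g := by
    rw [L2.inner_def]
    refine integral_congr_ae ?_
    filter_upwards [Lp.coeFn_star f] with x hx
    simp [hx, mul_comm]
  -- Parseval: `∫ f g = ∑ₙ f̂(-n) ĝ(n)`, and only `n = 0` survives.
  rw [h_inner, ← fourierBasis.tsum_inner_mul_inner, tsum_eq_single 0]
  · rw [inner_star_fourierBasis, inner_fourierBasis, neg_zero]
  · intro n hn
    rw [inner_star_fourierBasis, inner_fourierBasis]
    rcases hn.lt_or_gt with hneg | hpos
    · rw [hg n hneg, mul_zero]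
    · rw [hf (-n) (neg_lt_zero.mpr hpos), zero_mul]

end FourierCoeff

theorem inner_oneH (f : Ltwo) : inner ℂ (oneH : Ltwo) f = fourierCoeff f 0 := by
  rw [← inner_fourierBasis, coe_fourierBasis]
  rfl

theorem oneH_coeFn : ((oneH : Ltwo) : Tc → ℂ) =ᵐ[muc] fun _ => 1 := by
  filter_upwards [coeFn_fourierLp (T := 2 * Real.pi) 2 0] with x hx
  exact hx.trans fourier_zero

theorem mem_Kspace_iff {θ h : Hd} :
    h ∈ Kspace θ ↔ ∀ q ∈ thetaHardy θ, inner ℂ q (h : Ltwo) = 0 :=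
  ⟨fun hh => hh.2, fun hh => ⟨h.2, hh⟩⟩

def modelSpace (θ : Hd) : Submodule ℂ Hd where
  carrier := Kspace θ
  add_mem' {a b} ha hb := mem_Kspace_iff.mpr fun q hq => by
    rw [Submodule.coe_add, inner_add_right, mem_Kspace_iff.mp ha q hq,
      mem_Kspace_iff.mp hb q hq, add_zero]
  zero_mem' := mem_Kspace_iff.mpr fun q _ => inner_zero_right q
  smul_mem' c a ha := mem_Kspace_iff.mpr fun q hq => by
    rw [Submodule.coe_smul, inner_smul_right, mem_Kspace_iff.mp ha q hq, mul_zero]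

theorem oneH_mem_Kspace {θ : Hd} (hθ0 : ipH θ oneH = 0) : oneH ∈ Kspace θ := by
  refine mem_Kspace_iff.mpr fun q ⟨f, hq⟩ => ?_
  rw [ipH, inner_oneH] at hθ0
  rw [← inner_conj_symm, inner_oneH, fourierCoeff_congr_ae hq,
    fourierCoeff_mul_zero (mem_Hardy_iff.mp θ.2) (mem_Hardy_iff.mp f.2), hθ0, zero_mul, map_zero]

theorem IsIsomMult.inner_eq_inner {p : Tc → ℂ} {θ : Hd} (hp : IsIsomMult p θ) {h k g l : Hd}
    (hh : h ∈ Kspace θ) (hk : k ∈ Kspace θ)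
    (hg : ((g : Ltwo) : Tc → ℂ) =ᵐ[muc] fun x => p x * ((h : Ltwo) : Tc → ℂ) x)
    (hl : ((l : Ltwo) : Tc → ℂ) =ᵐ[muc] fun x => p x * ((k : Ltwo) : Tc → ℂ) x) :
    inner ℂ (g : Ltwo) (l : Ltwo) = inner ℂ (h : Ltwo) (k : Ltwo) := by
  refine inner_eq_inner_of_norm_add_smul_eq fun c => ?_
  obtain ⟨m, hm, hm_norm⟩ :=
    hp.2 (h + c • k) ((modelSpace θ).add_mem hh ((modelSpace θ).smul_mem c hk))
  have hm_eq : (m : Ltwo) = g + c • l := by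
    refine Lp.ext ?_
    filter_upwards [hm, hg, hl, Lp.coeFn_add (h : Ltwo) (c • (k : Ltwo)),
      Lp.coeFn_smul c (k : Ltwo), Lp.coeFn_add (g : Ltwo) (c • (l : Ltwo)),
      Lp.coeFn_smul c (l : Ltwo)] with x hmx hgx hlx hadd₁ hsmul₁ hadd₂ hsmul₂
    simp only [Submodule.coe_add, Submodule.coe_smul] at hmx
    simp only [hmx, hgx, hlx, hadd₁, hsmul₁, hadd₂, hsmul₂, Pi.add_apply, Pi.smul_apply,
      smul_eq_mul]
    ring
  rw [← hm_eq, hm_norm, Submodule.coe_add, Submodule.coe_smul]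

theorem projection_of_one_onto_weighted_model_general
    (θ : Hd) (hθ0 : ipH θ oneH = 0)
    (p : Tc → ℂ) (hp : IsIsomMult p θ)
    (P0 : Hd) (hP0 : ((P0 : Ltwo) : Tc → ℂ) =ᵐ[muc] p) :
    ∀ h ∈ Kspace θ, ∀ g : Hd,
      (((g : Ltwo) : Tc → ℂ) =ᵐ[muc] fun x => p x * ((h : Ltwo) : Tc → ℂ) x) →
      ipH g ((starRingEnd ℂ) (ipH P0 oneH) • P0) = ipH g oneH := by
  intro h hh g hg
  have hP0_mul : ((P0 : Ltwo) : Tc → ℂ) =ᵐ[muc] fun x => p x * ((oneH : Ltwo) : Tc → ℂ) x := by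
    filter_upwards [hP0, oneH_coeFn] with x hx h1
    rw [hx, h1, mul_one]
  have hg_mul : ((g : Ltwo) : Tc → ℂ) =ᵐ[muc]
      fun x => ((P0 : Ltwo) : Tc → ℂ) x * ((h : Ltwo) : Tc → ℂ) x := by
    filter_upwards [hg, hP0] with x hx h1
    rw [hx, h1]
  have h_inner : inner ℂ (P0 : Ltwo) (g : Ltwo) = inner ℂ (oneH : Ltwo) (h : Ltwo) :=
    hp.inner_eq_inner (oneH_mem_Kspace hθ0) hh hP0_mul hg
  rw [ipH, ipH, ipH, Submodule.coe_smul, inner_smul_left, conj_conj, h_inner, inner_oneH,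
    inner_oneH, inner_oneH, fourierCoeff_congr_ae hg_mul,
    fourierCoeff_mul_zero (mem_Hardy_iff.mp P0.2) (mem_Hardy_iff.mp h.2)]

/-- If `θ(0) = 0` and `p` is an isometric multiplier on `K_θ`, then
`⟨p·h, p(0)̄·p⟩ = ⟨p·h, 𝟙⟩` for all `h ∈ K_θ`. -/
theorem projection_of_one_onto_weighted_model
    (θ : Hd) (hθ : IsInnerFn θ) (hθ0 : ipH θ oneH = 0)
    (p : Tc → ℂ) (hp : IsIsomMult p θ)
    (P0 : Hd) (hP0 : ((P0 : Ltwo) : Tc → ℂ) =ᵐ[muc] p) :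
    ∀ h ∈ Kspace θ, ∀ g : Hd,
      (((g : Ltwo) : Tc → ℂ) =ᵐ[muc] fun x => p x * ((h : Ltwo) : Tc → ℂ) x) →
      ipH g ((starRingEnd ℂ) (ipH P0 oneH) • P0) = ipH g oneH :=
  projection_of_one_onto_weighted_model_general θ hθ0 p hp P0 hP0

end HankelSchmidt
end
end

section
/- Let α ∈ ℂ with |α| < 1 and h ∈ L²(𝕋). Then U_μ(z̄·conj(h)) = −z̄·conj(U_μ h) as elements of L²(𝕋), where z̄·conj(h) denotes the function z ↦ z̄·conj(h(z)). -/
open MeasureTheory Complex Filter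

noncomputable section

theorem MeasureTheory.addHaar_image_eq_zero_of_differentiableAt_of_countable
    {E : Type*} [NormedAddCommGroup E] [NormedSpace ℝ E] [FiniteDimensional ℝ E]
    [MeasurableSpace E] [BorelSpace E] (μ : Measure E) [μ.IsAddHaarMeasure] [NullSingletonClass μ]
    {f : E → E} {C : Set E} (hC : C.Countable) (hf : ∀ x ∉ C, DifferentiableAt ℝ f x)
    {s : Set E} (hs : μ s = 0) : μ (f '' s) = 0 := by
  have hsplit : f '' s ⊆ f '' (s \ C) ∪ f '' C := by
    rw [← Set.image_union]; exact Set.image_mono (by simp)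
  refine measure_mono_null hsplit (measure_union_null ?_ ((hC.image f).measure_zero μ))
  exact addHaar_image_eq_zero_of_differentiableOn_of_addHaar_eq_zero μ
    (fun x hx => (hf x hx.2).differentiableWithinAt) (measure_mono_null Set.sdiff_subset hs)

namespace AddCircle

variable {T : ℝ} [Fact (0 < T)]

theorem volume_preimage_mk_eq_zero {S : Set (AddCircle T)} (hS : volume S = 0) :
    volume ((↑) ⁻¹' S : Set ℝ) = 0 := by
  have hcover : ((↑) ⁻¹' S : Set ℝ) ⊆ ⋃ n : ℤ, (↑) ⁻¹' S ∩ Set.Ioc (n • T) (n • T + T) := by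
    intro r hr
    obtain ⟨n, hn⟩ := Set.mem_iUnion.mp
      ((iUnion_Ioc_add_zsmul (Fact.out : 0 < T) 0).symm ▸ Set.mem_univ r)
    refine Set.mem_iUnion.mpr ⟨n, hr, ?_⟩
    simpa [add_one_zsmul, add_mul, add_comm] using hn
  refine measure_mono_null hcover (measure_iUnion_null fun n => ?_)
  rw [← Measure.restrict_apply' measurableSet_Ioc]
  exact (AddCircle.measurePreserving_mk T (n • T)).quasiMeasurePreserving.preimage_null hS

theorem volume_image_mk_eq_zero {A : Set ℝ} (hA : volume A = 0) :
    volume ((↑) '' A : Set (AddCircle T)) = 0 := by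
  set B := toMeasurable volume A
  have hpre : MeasurableSet ((↑) ⁻¹' ((↑) '' B : Set (AddCircle T)) : Set ℝ) := by
    rw [QuotientAddGroup.preimage_image_mk]
    exact .iUnion fun n => measurable_add_const _ (measurableSet_toMeasurable _ _)
  refine measure_mono_null (Set.image_mono (subset_toMeasurable volume A)) ?_
  rw [add_projection_respects_measure T 0 hpre]
  refine measure_mono_null Set.inter_subset_left ?_
  rw [QuotientAddGroup.preimage_image_mk]
  refine measure_iUnion_null fun n => ?_
  rw [measure_preimage_add_right, measure_toMeasurable, hA]

theorem quasiMeasurePreserving_of_lift {f : AddCircle T → AddCircle T} {F : ℝ → ℝ}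
    (hf : Measurable f) (hlift : ∀ r : ℝ, f r = F r)
    (hinv : ∀ r : ℝ, ((F (F r) : ℝ) : AddCircle T) = r)
    (hnull : ∀ A : Set ℝ, volume A = 0 → volume (F '' A) = 0) :
    Measure.QuasiMeasurePreserving f volume volume := by
  refine ⟨hf, Measure.AbsolutelyContinuous.mk fun S hS h0 => ?_⟩
  rw [Measure.map_apply hf hS]
  refine measure_mono_null ?_ (volume_image_mk_eq_zero (hnull _ (volume_preimage_mk_eq_zero h0)))
  intro x hx
  induction x using QuotientAddGroup.induction_on with | H r => ?_
  refine ⟨F (F r), ⟨F r, ?_, rfl⟩, hinv r⟩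
  simpa [Set.mem_preimage, hlift] using hx

end AddCircle

namespace HankelSchmidt

open ComplexConjugate

theorem one_sub_conj_mul_ne_zero {α z : ℂ} (hα : ‖α‖ < 1) (hz : ‖z‖ ≤ 1) :
    1 - conj α * z ≠ 0 := by
  refine sub_ne_zero.mpr fun h => ?_
  have : ‖conj α * z‖ < 1 := by
    rw [norm_mul, RCLike.norm_conj]
    exact lt_of_le_of_lt (mul_le_of_le_one_right (norm_nonneg α) hz) hα
  rw [← h, norm_one] at this
  exact lt_irrefl 1 this

theorem norm_mobius {α z : ℂ} (hα : ‖α‖ < 1) (hz : ‖z‖ = 1) : ‖mobius α z‖ = 1 := by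
  have hden : 1 - conj α * z = z * conj (z - α) := by
    rw [map_sub]; linear_combination -(by simp [Complex.mul_conj', hz] : z * conj z = 1)
  have hne : z - α ≠ 0 := fun h => one_sub_conj_mul_ne_zero hα hz.le (by rw [hden, h]; simp)
  rw [mobius, norm_div, hden, norm_mul, RCLike.norm_conj, hz, one_mul, norm_sub_rev]
  exact div_self (norm_ne_zero_iff.mpr hne)

theorem mobius_mobius {α z : ℂ} (hα : ‖α‖ ≠ 1) (hz : 1 - conj α * z ≠ 0) :
    mobius α (mobius α z) = z := by
  have hαα : 1 - α * conj α ≠ 0 := by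
    rw [Complex.mul_conj, Complex.normSq_eq_norm_sq, sub_ne_zero]
    exact_mod_cast fun h => hα (by nlinarith [norm_nonneg α])
  have hden : 1 - conj α * mobius α z = (1 - α * conj α) / (1 - conj α * z) := by
    rw [mobius]; field_simp; ring
  have hz' : 1 - z * conj α ≠ 0 := by rwa [mul_comm]
  rw [mobius, hden, mobius]
  field_simp
  ring

theorem ofReal_div_mul_conj_mobius {α z : ℂ} (c : ℝ) (hz : ‖z‖ = 1)
    (hden : 1 - conj α * z ≠ 0) :
    c / (1 - conj α * z) * conj (mobius α z) = -(conj z * conj (c / (1 - conj α * z))) := by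
  have hden' : 1 - conj z * α ≠ 0 := by
    simpa [mul_comm] using (map_ne_zero conj).mpr hden
  simp only [mobius, map_div₀, map_sub, map_one, map_mul, Complex.conj_conj, Complex.conj_ofReal]
  field_simp
  linear_combination (-(c * conj α)) * (by simp [Complex.mul_conj', hz] : z * conj z = 1)

open Complex in
theorem circlePt_coe (r : ℝ) : circlePt (r : Tc) = exp (r * I) := by
  rw [circlePt, fourier_coe_apply]
  congr 1
  push_cast
  field_simp

theorem circlePt_injective : Function.Injective circlePt := fun x y h =>
  AddCircle.injective_toCircle Real.two_pi_pos.ne'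
    (Circle.ext (by simpa [circlePt, fourier_apply] using h))

theorem norm_circlePt (x : Tc) : ‖circlePt x‖ = 1 := by
  rw [circlePt, fourier_apply]; exact Circle.norm_coe _

theorem circlePt_mobiusT {α : ℂ} (hα : ‖α‖ < 1) (x : Tc) :
    circlePt (mobiusT α x) = mobius α (circlePt x) := by
  have h := Complex.norm_mul_exp_arg_mul_I (mobius α (circlePt x))
  rwa [norm_mobius hα (norm_circlePt x), Complex.ofReal_one, one_mul, ← circlePt_coe] at h

theorem mobiusT_mobiusT {α : ℂ} (hα : ‖α‖ < 1) (x : Tc) : mobiusT α (mobiusT α x) = x :=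
  circlePt_injective <| by
    rw [circlePt_mobiusT hα, circlePt_mobiusT hα,
      mobius_mobius hα.ne (one_sub_conj_mul_ne_zero hα (norm_circlePt x).le)]

theorem measurable_mobiusT (α : ℂ) : Measurable (mobiusT α) := by
  unfold mobiusT mobius circlePt
  fun_prop

theorem umuWeight_mul_conj_circlePt_mobiusT {α : ℂ} (hα : ‖α‖ < 1) (x : Tc) :
    umuWeight α x * conj (circlePt (mobiusT α x)) =
      -(conj (circlePt x) * conj (umuWeight α x)) := by
  rw [circlePt_mobiusT hα, umuWeight]
  exact ofReal_div_mul_conj_mobius _ (norm_circlePt x)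
    (one_sub_conj_mul_ne_zero hα (norm_circlePt x).le)

open Complex in
def mobiusLift (α : ℂ) (r : ℝ) : ℝ := arg (mobius α (exp (r * I)))

theorem mobiusT_coe (α : ℂ) (r : ℝ) : mobiusT α r = mobiusLift α r := by
  rw [mobiusT, circlePt_coe, mobiusLift]

open Complex in
theorem differentiableAt_mobiusLift {α : ℂ} (hα : ‖α‖ < 1) {r : ℝ}
    (hr : mobiusLift α r ≠ Real.pi) : DifferentiableAt ℝ (mobiusLift α) r := by
  have hnorm := norm_mobius hα (norm_exp_ofReal_mul_I r)
  have hslit : mobius α (exp (r * I)) ∈ slitPlane :=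
    mem_slitPlane_iff_arg.mpr ⟨hr, norm_ne_zero_iff.mp (by rw [hnorm]; exact one_ne_zero)⟩
  have hden : 1 - conj α * exp (r * I) ≠ 0 :=
    one_sub_conj_mul_ne_zero hα (norm_exp_ofReal_mul_I r).le
  have hmob : DifferentiableAt ℝ (fun t : ℝ => mobius α (exp (t * I))) r := by
    unfold mobius
    fun_prop (disch := exact hden)
  have hlog : mobiusLift α = fun t : ℝ => (log (mobius α (exp (t * I)))).im :=
    funext fun t => (log_im _).symm
  rw [hlog]
  exact imCLM.differentiableAt.comp r
    (((differentiableAt_log hslit).restrictScalars ℝ).comp r hmob)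

theorem countable_setOf_mobiusLift_eq_pi {α : ℂ} (hα : ‖α‖ < 1) :
    {r : ℝ | mobiusLift α r = Real.pi}.Countable := by
  obtain ⟨r₀, hr₀⟩ := QuotientAddGroup.mk_surjective (mobiusT α Real.pi)
  have hsub : {r : ℝ | mobiusLift α r = Real.pi} ⊆ (↑) ⁻¹' ((↑) '' {r₀} : Set Tc) := by
    intro r hr
    refine ⟨r₀, rfl, ?_⟩
    rw [hr₀, ← mobiusT_mobiusT hα r, mobiusT_coe α r, (hr : mobiusLift α r = Real.pi)]
  refine .mono hsub ?_
  rw [QuotientAddGroup.preimage_image_mk]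
  exact Set.countable_iUnion fun n => (Set.countable_singleton r₀).preimage (add_left_injective _)

theorem quasiMeasurePreserving_mobiusT {α : ℂ} (hα : ‖α‖ < 1) :
    Measure.QuasiMeasurePreserving (mobiusT α) muc muc := by
  have hvol : Measure.QuasiMeasurePreserving (mobiusT α) volume volume :=
    AddCircle.quasiMeasurePreserving_of_lift (measurable_mobiusT α) (mobiusT_coe α)
      (fun r => by rw [← mobiusT_coe, ← mobiusT_coe, mobiusT_mobiusT hα])
      (fun _ hA => addHaar_image_eq_zero_of_differentiableAt_of_countable volume
        (countable_setOf_mobiusLift_eq_pi hα) (fun _ hr => differentiableAt_mobiusLift hα hr) hA)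
  have hvolume : (volume : Measure Tc) = ENNReal.ofReal (2 * Real.pi) • muc :=
    AddCircle.volume_eq_smul_haarAddCircle
  refine (hvol.mono_left ?_).mono_right ?_
  · rw [hvolume]
    exact Measure.absolutelyContinuous_smul (by simp [Real.pi_pos])
  · rw [hvolume]
    exact Measure.smul_absolutelyContinuous

/-- `U_μ(z̄·h̄) = −z̄·(U_μ h)̄` in `L²(𝕋)`. -/
theorem umu_conj_formula (α : ℂ) (hα : ‖α‖ < 1)
    (U : Ltwo → Ltwo) (hU : IsUmu α U) (h g : Ltwo)
    (hg : (g : Tc → ℂ) =ᵐ[muc] fun x =>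
      (starRingEnd ℂ) (circlePt x) * (starRingEnd ℂ) ((h : Tc → ℂ) x)) :
    ((U g : Ltwo) : Tc → ℂ) =ᵐ[muc] fun x =>
      -((starRingEnd ℂ) (circlePt x) * (starRingEnd ℂ) (((U h : Ltwo) : Tc → ℂ) x)) := by
  filter_upwards [hU g, hU h, (quasiMeasurePreserving_mobiusT hα).ae_eq hg]
    with x hUg hUh hgμ
  set y := mobiusT α x
  have hgy : (g : Tc → ℂ) y = conj (circlePt y) * conj ((h : Tc → ℂ) y) := hgμ
  rw [hUg, hUh, hgy, map_mul]
  linear_combination conj ((h : Tc → ℂ) y) * umuWeight_mul_conj_circlePt_mobiusT hα x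

end HankelSchmidt
end
end
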